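/- Consider the action of B_n = C_2 ≀ S_n on T_n by permuting spikes and swapping a_i ↔ b_i. Every flat F of T_n with e_* ∉ F and rank k lies in the B_n-orbit of F_k^I = {a_1, ..., a_k}, and the stabilizer of F_k^I in B_n is isomorphic to S_k × B_{n−k}. -/

import Mathlib

open Pointwise

inductive TnEdge (n : ℕ) : Type
  | spine : TnEdge n
  | a (i : Fin n) : TnEdge n
  | b (i : Fin n) : TnEdge n
  deriving DecidableEq, Fintype

open TnEdge

def TnIndep (n : ℕ) (S : Set (TnEdge n)) : Prop :=
  (∀ i : Fin n, ¬ ({spine, a i, b i} : Set (TnEdge n)) ⊆ S) ∧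
  (∀ i j : Fin n, i ≠ j → ¬ ({a i, b i, a j, b j} : Set (TnEdge n)) ⊆ S)

/-- The rank of a set in a matroid: the largest size of an independent subset. -/
noncomputable def mRank {α : Type*} (M : Matroid α) (S : Set α) : ℕ :=
  sSup (Set.ncard '' {I | I ⊆ S ∧ M.Indep I})

/-- A permutation of the spikes of the thagomizer matroid. -/
def spikePerm {n : ℕ} (σ : Equiv.Perm (Fin n)) : Equiv.Perm (TnEdge n) where
  toFun e := match e with | spine => spine | a i => a (σ i) | b i => b (σ i)
  invFun e := match e with | spine => spine | a i => a (σ.symm i) | b i => b (σ.symm i)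
  left_inv e := by cases e <;> simp
  right_inv e := by cases e <;> simp

/-- The swap of the two edges of the `i`-th spike. -/
def spikeSwap {n : ℕ} (i : Fin n) : Equiv.Perm (TnEdge n) :=
  Equiv.swap (a i) (b i)

/-- The hyperoctahedral group `B_n`, realized as the group of permutations of the
ground set of `T_n` generated by spike permutations and spike swaps. -/
def BnGroup (n : ℕ) : Subgroup (Equiv.Perm (TnEdge n)) :=
  Subgroup.closure (Set.range (spikePerm (n := n)) ∪ Set.range (spikeSwap (n := n)))

/-- The permutation action of `S_m` on the group `C_2^m`. -/
def permAutHom (m : ℕ) :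
    Equiv.Perm (Fin m) →* MulAut (Fin m → Multiplicative (ZMod 2)) where
  toFun σ := MulEquiv.arrowCongr σ (MulEquiv.refl _)
  map_one' := rfl
  map_mul' _ _ := rfl

/-- The hyperoctahedral group `B_m = C_2 ≀ S_m = C_2^m ⋊ S_m`. -/
def hyperoctahedral (m : ℕ) : Type :=
  SemidirectProduct (Fin m → Multiplicative (ZMod 2)) (Equiv.Perm (Fin m)) (permAutHom m)

noncomputable instance (m : ℕ) : Group (hyperoctahedral m) :=
  inferInstanceAs (Group (SemidirectProduct _ _ _))

/-- The representative flat `F_k^I = {a_1, …, a_k}`. -/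
def FkI (n k : ℕ) : Set (TnEdge n) := {e | ∃ i : Fin n, (i : ℕ) < k ∧ e = a i}

/-!
A flat `F` avoiding the spine meets every spike in at most one edge, because `{a_i, b_i}` is
independent and spans `e_*`; so `F` is independent and `|F| = k`. Flipping the spikes on which
`F` uses `b_i` and then permuting spike indices carries `F` onto `F_k^I`.

For the stabilizer, `B_n` acts faithfully on the edges of `T_n` and its image is the group
generated by spike permutations and swaps. An element `(ε, σ)` maps `F_k^I` into itself exactly
when `σ` preserves `{1, …, k}` and `ε` is trivial there, i.e. when `σ = τ ⊕ ρ` with `τ ∈ S_k` and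
`(ε|_{k+1..n}, ρ) ∈ B_{n-k}`.
-/

lemma mRank_eq_ncard {α : Type*} {M : Matroid α} {S : Set α} (hS : M.Indep S)
    (hfin : S.Finite) : mRank M S = S.ncard :=
  IsGreatest.csSup_eq ⟨⟨S, ⟨subset_rfl, hS⟩, rfl⟩,
    by rintro _ ⟨I, ⟨hIS, -⟩, rfl⟩; exact Set.ncard_le_ncard hIS hfin⟩

lemma Equiv.Perm.exists_image_eq {α : Type*} [Finite α] {s t : Set α} (h : s.ncard = t.ncard) :
    ∃ σ : Equiv.Perm α, σ '' s = t := by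
  classical
  obtain ⟨e⟩ : Nonempty (s ≃ t) := by
    rw [← Finite.card_eq, Nat.card_coe_set_eq, Nat.card_coe_set_eq, h]
  refine ⟨e.extendSubtype, Set.ext fun y => ⟨?_, fun hy => ?_⟩⟩
  · rintro ⟨x, hx, rfl⟩
    exact e.extendSubtype_mem x hx
  · refine ⟨e.symm ⟨y, hy⟩, (e.symm ⟨y, hy⟩).2, ?_⟩
    rw [e.extendSubtype_apply_of_mem _ (e.symm ⟨y, hy⟩).2]
    simp

lemma ncard_setOf_val_lt {n k : ℕ} (hk : k ≤ n) : {i : Fin n | (i : ℕ) < k}.ncard = k := by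
  rw [← Fin.range_castLE hk, Set.ncard_range_of_injective (Fin.castLE_injective hk), Nat.card_fin]

namespace TnEdge

abbrev C₂ := Multiplicative (ZMod 2)

lemma C₂.eq_one_or_eq_ofAdd_one (u : C₂) : u = 1 ∨ u = Multiplicative.ofAdd 1 := by
  revert u; decide

lemma C₂.mul_eq_one_iff (u v : C₂) : u * v = 1 ↔ (u = 1 ↔ v = 1) := by
  revert u v; decide

variable {n : ℕ}

def flipFun (ε : Fin n → C₂) : TnEdge n → TnEdge n
  | spine => spine
  | a i => if ε i = 1 then a i else b i
  | b i => if ε i = 1 then b i else a i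

lemma flipFun_involutive (ε : Fin n → C₂) : Function.Involutive (flipFun ε) := by
  rintro (_ | i | i)
  · rfl
  all_goals by_cases h : ε i = 1 <;> simp [flipFun, h]

def spikeFlip (ε : Fin n → C₂) : Equiv.Perm (TnEdge n) :=
  (flipFun_involutive ε).toPerm

lemma spikeFlip_a (ε : Fin n → C₂) (i : Fin n) :
    spikeFlip ε (a i) = if ε i = 1 then a i else b i := rfl

lemma spikeFlip_b (ε : Fin n → C₂) (i : Fin n) :
    spikeFlip ε (b i) = if ε i = 1 then b i else a i := rfl

@[simps]
def spikeFlipHom : (Fin n → C₂) →* Equiv.Perm (TnEdge n) where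
  toFun := spikeFlip
  map_one' := by
    ext (_ | i | i)
    · rfl
    all_goals simp [spikeFlip_a, spikeFlip_b]
  map_mul' ε ε' := by
    ext (_ | i | i)
    · rfl
    all_goals by_cases h : ε i = 1 <;> by_cases h' : ε' i = 1 <;>
      simp [spikeFlip_a, spikeFlip_b, C₂.mul_eq_one_iff, h, h']

def spikePermHom : Equiv.Perm (Fin n) →* Equiv.Perm (TnEdge n) where
  toFun := spikePerm
  map_one' := by ext (_ | i | i) <;> rfl
  map_mul' _ _ := by ext (_ | i | i) <;> rfl

lemma spikePerm_a (σ : Equiv.Perm (Fin n)) (i : Fin n) : spikePerm σ (a i) = a (σ i) := rfl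

lemma spikePerm_b (σ : Equiv.Perm (Fin n)) (i : Fin n) : spikePerm σ (b i) = b (σ i) := rfl

lemma permAutHom_apply (σ : Equiv.Perm (Fin n)) (ε : Fin n → C₂) (i : Fin n) :
    permAutHom n σ ε i = ε (σ.symm i) := rfl

lemma spikeFlip_permAutHom (σ : Equiv.Perm (Fin n)) (ε : Fin n → C₂) :
    spikeFlip (permAutHom n σ ε) = spikePerm σ * spikeFlip ε * (spikePerm σ)⁻¹ := by
  rw [eq_mul_inv_iff_mul_eq]
  ext (_ | i | i)
  · rfl
  all_goals by_cases h : ε i = 1 <;>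
    simp [spikeFlip_a, spikeFlip_b, spikePerm_a, spikePerm_b, permAutHom_apply, h]

def toPerm : hyperoctahedral n →* Equiv.Perm (TnEdge n) :=
  SemidirectProduct.lift spikeFlipHom spikePermHom fun σ => by
    ext ε : 2; exact DFunLike.congr_fun (spikeFlip_permAutHom σ ε) _

lemma toPerm_a (x : hyperoctahedral n) (i : Fin n) :
    toPerm x (a i) = spikeFlip x.1 (a (x.2 i)) := rfl

lemma toPerm_injective : Function.Injective (toPerm (n := n)) := by
  refine (injective_iff_map_eq_one _).2 fun x hx => ?_
  have hfix (i : Fin n) : spikeFlip x.1 (a (x.2 i)) = a i := DFunLike.congr_fun hx (a i)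
  have hσ : x.2 = 1 := by
    ext i
    have := hfix i
    rw [spikeFlip_a] at this
    split_ifs at this
    simp_all
  have hε : x.1 = 1 := by
    funext i
    have := hfix i
    rw [hσ, spikeFlip_a] at this
    split_ifs at this with h
    exact h
  exact SemidirectProduct.ext hε hσ

lemma spikeSwap_eq_spikeFlip (i : Fin n) :
    spikeSwap i = spikeFlip (Pi.mulSingle i (Multiplicative.ofAdd 1)) := by
  ext (_ | j | j)
  · rfl
  all_goals
    by_cases h : j = i
    · subst h; simp [spikeSwap, spikeFlip_a, spikeFlip_b]
    · simp [spikeSwap, spikeFlip_a, spikeFlip_b, h, Equiv.swap_apply_of_ne_of_ne]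

lemma spikePerm_mem_BnGroup (σ : Equiv.Perm (Fin n)) : spikePerm σ ∈ BnGroup n :=
  Subgroup.subset_closure (Or.inl ⟨σ, rfl⟩)

lemma spikeSwap_mem_BnGroup (i : Fin n) : spikeSwap i ∈ BnGroup n :=
  Subgroup.subset_closure (Or.inr ⟨i, rfl⟩)

lemma spikeFlip_mem_BnGroup (ε : Fin n → C₂) : spikeFlip ε ∈ BnGroup n := by
  change ε ∈ (BnGroup n).comap spikeFlipHom
  rw [← Finset.univ_prod_mulSingle ε]
  refine Subgroup.prod_mem _ fun i _ => ?_
  rcases C₂.eq_one_or_eq_ofAdd_one (ε i) with h | h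
  · simp [h, one_mem]
  · rw [h, Subgroup.mem_comap, spikeFlipHom_apply, ← spikeSwap_eq_spikeFlip]
    exact spikeSwap_mem_BnGroup i

lemma range_toPerm : (toPerm (n := n)).range = BnGroup n := by
  refine le_antisymm ?_ ((Subgroup.closure_le _).2 ?_)
  · rintro _ ⟨x, rfl⟩
    exact mul_mem (spikeFlip_mem_BnGroup x.1) (spikePerm_mem_BnGroup x.2)
  · rintro _ (⟨σ, rfl⟩ | ⟨i, rfl⟩)
    · exact ⟨SemidirectProduct.inr σ, SemidirectProduct.lift_inr _ _ _ σ⟩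
    · exact ⟨SemidirectProduct.inl _, (SemidirectProduct.lift_inl _ _ _ _).trans
        (spikeSwap_eq_spikeFlip i).symm⟩

lemma tnIndep_of_pairFree {F : Set (TnEdge n)} (hpair : ∀ i, a i ∈ F → b i ∉ F) :
    TnIndep n F :=
  ⟨fun i h => hpair i (h (by simp)) (h (by simp)),
    fun i _ _ h => hpair i (h (by simp)) (h (by simp))⟩

lemma tnIndep_pair (i : Fin n) : TnIndep n {a i, b i} := by
  refine ⟨fun j h => by simpa using h (Set.mem_insert _ _), fun j l hjl h => hjl ?_⟩
  have hj := h (by simp : a j ∈ _)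
  have hl := h (by simp : a l ∈ _)
  simp_all

lemma spine_mem_closure_pair {M : Matroid (TnEdge n)} (hE : M.E = Set.univ)
    (hInd : ∀ S, M.Indep S ↔ TnIndep n S) (i : Fin n) : spine ∈ M.closure {a i, b i} :=
  ((hInd _).2 (tnIndep_pair i)).mem_closure_iff'.2
    ⟨hE ▸ trivial, fun h => ((hInd _).1 h |>.1 i subset_rfl).elim⟩

lemma pairFree_of_isFlat {M : Matroid (TnEdge n)} (hE : M.E = Set.univ)
    (hInd : ∀ S, M.Indep S ↔ TnIndep n S) {F : Set (TnEdge n)} (hF : M.IsFlat F)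
    (hsp : spine ∉ F) (i : Fin n) : a i ∈ F → b i ∉ F := fun ha hb =>
  hsp <| hF.closure.subset <|
    M.closure_subset_closure (Set.pair_subset ha hb) (spine_mem_closure_pair hE hInd i)

lemma exists_spikeFlip_image_eq {F : Set (TnEdge n)} (hsp : spine ∉ F)
    (hpair : ∀ i, a i ∈ F → b i ∉ F) :
    ∃ ε, spikeFlip ε '' F = a '' {i | a i ∈ F ∨ b i ∈ F} := by
  classical
  refine ⟨fun i => if b i ∈ F then Multiplicative.ofAdd 1 else 1, Set.ext fun e => ⟨?_, ?_⟩⟩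
  · rintro ⟨_ | i | i, he, rfl⟩
    · exact absurd he hsp
    · exact ⟨i, Or.inl he, by simp [spikeFlip_a, hpair i he]⟩
    · exact ⟨i, Or.inr he, by simp [spikeFlip_b, he]⟩
  · rintro ⟨i, hi, rfl⟩
    by_cases hb : b i ∈ F
    · exact ⟨b i, hb, by simp [spikeFlip_b, hb]⟩
    · exact ⟨a i, hi.resolve_right hb, by simp [spikeFlip_a, hb]⟩

end TnEdge

lemma FkI_eq_image (n k : ℕ) : FkI n k = a '' {i : Fin n | (i : ℕ) < k} := by
  ext e; simp [FkI, eq_comm]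

lemma exists_mem_BnGroup_image_eq_FkI {n k : ℕ} (hk : k ≤ n) {F : Set (TnEdge n)}
    (hsp : spine ∉ F) (hpair : ∀ i, a i ∈ F → b i ∉ F) (hcard : F.ncard = k) :
    ∃ g ∈ BnGroup n, ⇑g '' F = FkI n k := by
  obtain ⟨ε, hε⟩ := exists_spikeFlip_image_eq hsp hpair
  have hS : {i | a i ∈ F ∨ b i ∈ F}.ncard = {i : Fin n | (i : ℕ) < k}.ncard := by
    rw [ncard_setOf_val_lt hk, ← hcard, ← Set.ncard_image_of_injective _ fun _ _ => a.inj, ← hε,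
      Set.ncard_image_of_injective _ (spikeFlip ε).injective]
  obtain ⟨σ, hσ⟩ := Equiv.Perm.exists_image_eq hS
  refine ⟨spikePerm σ * spikeFlip ε,
    mul_mem (spikePerm_mem_BnGroup σ) (spikeFlip_mem_BnGroup ε), ?_⟩
  rw [Equiv.Perm.coe_mul, Set.image_comp, hε, Set.image_image, FkI_eq_image, ← hσ,
    Set.image_image]
  rfl

namespace TnEdge

variable {ι : Type*} {m n : ℕ}

def extendSigns (e : ι ⊕ Fin m ≃ Fin n) : (Fin m → C₂) →* (Fin n → C₂) where
  toFun ε i := Sum.elim 1 ε (e.symm i)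
  map_one' := by funext i; obtain ⟨j | j, rfl⟩ := e.surjective i <;> simp
  map_mul' ε ε' := by funext i; obtain ⟨j | j, rfl⟩ := e.surjective i <;> simp

@[simp] lemma extendSigns_inl (e : ι ⊕ Fin m ≃ Fin n) (ε : Fin m → C₂) (i : ι) :
    extendSigns e ε (e (.inl i)) = 1 := by
  simp [extendSigns]

@[simp] lemma extendSigns_inr (e : ι ⊕ Fin m ≃ Fin n) (ε : Fin m → C₂) (j : Fin m) :
    extendSigns e ε (e (.inr j)) = ε j := by
  simp [extendSigns]

lemma extendSigns_injective (e : ι ⊕ Fin m ≃ Fin n) : Function.Injective (extendSigns e) :=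
  fun ε ε' h => funext fun j => by simpa using congr_fun h (e (.inr j))

def sumPerm (e : ι ⊕ Fin m ≃ Fin n) :
    Equiv.Perm ι × Equiv.Perm (Fin m) →* Equiv.Perm (Fin n) :=
  e.permCongrHom.toMonoidHom.comp (Equiv.Perm.sumCongrHom ι (Fin m))

@[simp] lemma sumPerm_inl (e : ι ⊕ Fin m ≃ Fin n) (p : Equiv.Perm ι × Equiv.Perm (Fin m))
    (i : ι) : sumPerm e p (e (.inl i)) = e (.inl (p.1 i)) := by
  simp [sumPerm, Equiv.permCongrHom_coe]

lemma sumPerm_injective (e : ι ⊕ Fin m ≃ Fin n) : Function.Injective (sumPerm e) :=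
  e.permCongrHom.injective.comp Equiv.Perm.sumCongrHom_injective

lemma extendSigns_permAutHom (e : ι ⊕ Fin m ≃ Fin n) (p : Equiv.Perm ι × Equiv.Perm (Fin m))
    (ε : Fin m → C₂) :
    extendSigns e (permAutHom m p.2 ε) = permAutHom n (sumPerm e p) (extendSigns e ε) := by
  funext i
  obtain ⟨j | j, rfl⟩ := e.surjective i <;>
    simp [extendSigns, permAutHom_apply, sumPerm, Equiv.permCongrHom_coe, Equiv.permCongr_def]

def stabHom (e : ι ⊕ Fin m ≃ Fin n) :
    Equiv.Perm ι × hyperoctahedral m →* hyperoctahedral n where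
  toFun p := ⟨extendSigns e p.2.1, sumPerm e (p.1, p.2.2)⟩
  map_one' := SemidirectProduct.ext (map_one _) (map_one _)
  map_mul' p q := SemidirectProduct.ext
    (by
      change extendSigns e (p.2.1 * permAutHom m p.2.2 q.2.1) =
        extendSigns e p.2.1 * permAutHom n (sumPerm e (p.1, p.2.2)) (extendSigns e q.2.1)
      rw [map_mul, extendSigns_permAutHom e (p.1, p.2.2)])
    (map_mul (sumPerm e) (p.1, p.2.2) (q.1, q.2.2))

lemma stabHom_left (e : ι ⊕ Fin m ≃ Fin n) (p : Equiv.Perm ι × hyperoctahedral m) :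
    (stabHom e p).1 = extendSigns e p.2.1 := rfl

lemma stabHom_right (e : ι ⊕ Fin m ≃ Fin n) (p : Equiv.Perm ι × hyperoctahedral m) :
    (stabHom e p).2 = sumPerm e (p.1, p.2.2) := rfl

lemma stabHom_injective (e : ι ⊕ Fin m ≃ Fin n) : Function.Injective (stabHom e) := by
  rintro ⟨τ, x⟩ ⟨τ', x'⟩ h
  obtain ⟨hsign, hperm⟩ := SemidirectProduct.ext_iff.1 h
  obtain ⟨rfl, hρ⟩ := Prod.ext_iff.1 (sumPerm_injective e hperm)
  exact Prod.ext rfl (SemidirectProduct.ext (extendSigns_injective e hsign) hρ)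

def aEdges (e : ι ⊕ Fin m ≃ Fin n) : Set (TnEdge n) := Set.range fun i => a (e (.inl i))

lemma toPerm_stabHom_image (e : ι ⊕ Fin m ≃ Fin n) (p : Equiv.Perm ι × hyperoctahedral m) :
    ⇑(toPerm (stabHom e p)) '' aEdges e = aEdges e := by
  have hval (i : ι) : toPerm (stabHom e p) (a (e (.inl i))) = a (e (.inl (p.1 i))) := by
    rw [toPerm_a, stabHom_left, stabHom_right, sumPerm_inl, spikeFlip_a, extendSigns_inl,
      if_pos rfl]
  rw [aEdges, ← Set.range_comp]
  simp only [Function.comp_def, hval]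
  exact p.1.surjective.range_comp fun i => a (e (.inl i))

lemma mem_range_stabHom [Finite ι] (e : ι ⊕ Fin m ≃ Fin n) {x : hyperoctahedral n}
    (hx : Set.MapsTo (toPerm x) (aEdges e) (aEdges e)) : x ∈ (stabHom e).range := by
  have hmaps (i : ι) : ∃ j, x.2 (e (.inl i)) = e (.inl j) ∧ x.1 (e (.inl j)) = 1 := by
    obtain ⟨j, hj⟩ := hx ⟨i, rfl⟩
    rw [toPerm_a, spikeFlip_a] at hj
    split_ifs at hj with h
    exact ⟨j, (a.inj hj).symm, a.inj hj ▸ h⟩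
  obtain ⟨p, hp⟩ : e.permCongrHom.symm x.2 ∈ (Equiv.Perm.sumCongrHom ι (Fin m)).range := by
    refine Equiv.Perm.mem_sumCongrHom_range_of_perm_mapsTo_inl ?_
    rintro _ ⟨i, rfl⟩
    obtain ⟨j, hj, -⟩ := hmaps i
    exact ⟨j, by simp [Equiv.permCongrHom_coe, hj]⟩
  have hσ : sumPerm e p = x.2 := by
    change e.permCongrHom (Equiv.Perm.sumCongrHom ι (Fin m) p) = x.2
    rw [hp, MulEquiv.apply_symm_apply]
  have hε : extendSigns e (fun j => x.1 (e (.inr j))) = x.1 := by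
    funext i
    obtain ⟨j | j, rfl⟩ := e.surjective i
    · obtain ⟨j', hj', hsign⟩ := hmaps (p.1.symm j)
      rw [← hσ, sumPerm_inl, Equiv.apply_symm_apply, e.injective.eq_iff, Sum.inl.injEq] at hj'
      rw [extendSigns_inl, hj', hsign]
    · rw [extendSigns_inr]
  exact ⟨(p.1, ⟨fun j => x.1 (e (.inr j)), p.2⟩), SemidirectProduct.ext hε hσ⟩

noncomputable def stabilizerEquiv [Finite ι] (e : ι ⊕ Fin m ≃ Fin n) :
    MulAction.stabilizer (BnGroup n) (aEdges e) ≃* Equiv.Perm ι × hyperoctahedral m := by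
  let f : Equiv.Perm ι × hyperoctahedral m →* MulAction.stabilizer (BnGroup n) (aEdges e) :=
    ((toPerm.comp (stabHom e)).codRestrict (BnGroup n)
      fun p => range_toPerm (n := n) ▸ ⟨stabHom e p, rfl⟩).codRestrict _
      fun p => toPerm_stabHom_image e p
  refine (MulEquiv.ofBijective f ⟨fun p q h => ?_, ?_⟩).symm
  · exact stabHom_injective e (toPerm_injective (congrArg Subtype.val (congrArg Subtype.val h)))
  · rintro ⟨⟨g, hg⟩, hstab⟩
    obtain ⟨x, rfl⟩ := range_toPerm (n := n) ▸ hg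
    replace hstab : ⇑(toPerm x) '' aEdges e = aEdges e := hstab
    obtain ⟨p, rfl⟩ := mem_range_stabHom e (Set.mapsTo_iff_image_subset.2 hstab.subset)
    exact ⟨p, rfl⟩

end TnEdge

lemma FkI_eq_aEdges {n k : ℕ} (hk : k ≤ n) :
    FkI n k = aEdges (finSumFinEquiv.trans (finCongr (Nat.add_sub_cancel' hk))) := by
  rw [FkI_eq_image, ← Fin.range_castLE hk, ← Set.range_comp]
  rfl

theorem thagomizer_typeI_orbit_and_stabilizer (n k : ℕ) (hk : k ≤ n)
    (M : Matroid (TnEdge n)) (hE : M.E = Set.univ)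
    (hInd : ∀ S, M.Indep S ↔ TnIndep n S)
    (F : Set (TnEdge n)) (hF : M.IsFlat F) (hsp : spine ∉ F) (hrk : mRank M F = k) :
    (∃ g ∈ BnGroup n, ⇑g '' F = FkI n k) ∧
    Nonempty (MulAction.stabilizer (BnGroup n) (FkI n k) ≃*
      Equiv.Perm (Fin k) × hyperoctahedral (n - k)) := by
  have hpair := pairFree_of_isFlat hE hInd hF hsp
  have hcard : F.ncard = k := by
    rw [← hrk, mRank_eq_ncard ((hInd F).2 (tnIndep_of_pairFree hpair)) F.toFinite]
  refine ⟨exists_mem_BnGroup_image_eq_FkI hk hsp hpair hcard, ?_⟩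
  rw [FkI_eq_aEdges hk]
  exact ⟨stabilizerEquiv _⟩
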